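/- Let H be the digraph with vertex set {1,2,3,4} and arc set {12, 21, 23, 34, 41} (a copy of C4'). Given a digraph D, let D' be the digraph obtained from D by replacing every arc uv of D with the gadget consisting of three new vertices x_{uv}, y_{uv}, z_{uv} and the four arcs u→x_{uv}, x_{uv}→y_{uv}, y_{uv}→z_{uv}, v→z_{uv} (so D' has no arcs between vertices of D, and the gadget vertices of different arcs are distinct). Define costs on D': for every t ∈ V(D), c_3(t) = 0 and c_1(t) = c_2(t) = c_4(t) = 1; all costs of the gadget vertices are 0. Then a homomorphism of D' to H exists, and the minimum cost of a homomorphism of D' to H equals |V(D)| − α(D). -/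

import Mathlib

/-!
A homomorphism `f` of `D'` to `H` can send two vertices `u, v` of `D` to the vertex `3` (index `2`)
only if `uv` is not an arc: the gadget of `uv` would give a walk `3 → x → y → z` in `H` with
`3 → z` as well, and none exists. So the vertices of `D` sent to `3` form an independent set,
and the cost of `f` is the number of the remaining vertices of `D`. Conversely, sending an
independent set `S` to `3`, all other vertices of `D` to `1`, and colouring each gadget according
to which of its two ends lie in `S` is a homomorphism of cost `|V(D)| - |S|`.
-/

namespace MinHomC4P

/-- the target digraph: vertices 1,2,3,4 (as 0,1,2,3 : Fin 4) and arcs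
{12, 21, 23, 34, 41}; a copy of C4'. -/
def HArc : Fin 4 → Fin 4 → Prop := fun a b =>
  (a, b) ∈ ([(0,1),(1,0),(1,2),(2,3),(3,0)] : List (Fin 4 × Fin 4))

/-- vertex set of D': the vertices of D together with three gadget vertices
x_{uv} = (e,0), y_{uv} = (e,1), z_{uv} = (e,2) for every arc e = uv of D. -/
abbrev GV (α : Type*) (Ad : α → α → Prop) : Type _ :=
  α ⊕ ({p : α × α // Ad p.1 p.2} × Fin 3)

/-- arcs of D': for each arc e = uv of D the gadget arcs
u→x_e, x_e→y_e, y_e→z_e, v→z_e. -/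
def GArc {α : Type*} (Ad : α → α → Prop) : GV α Ad → GV α Ad → Prop
  | Sum.inl u, Sum.inr (e, i) => (u = e.1.1 ∧ i = 0) ∨ (u = e.1.2 ∧ i = 2)
  | Sum.inr (e, i), Sum.inr (e', i') => e = e' ∧ ((i = 0 ∧ i' = 1) ∨ (i = 1 ∧ i' = 2))
  | _, _ => False

/-- costs: c_3(t) = 0 and c_1(t) = c_2(t) = c_4(t) = 1 for t ∈ V(D) (vertex 3 is
index 2 : Fin 4); all costs of gadget vertices are 0. -/
def cost {α : Type*} (Ad : α → α → Prop) : Fin 4 → GV α Ad → ℕ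
  | h, Sum.inl _ => if h = 2 then 0 else 1
  | _, Sum.inr _ => 0

instance : DecidableRel HArc := fun a b =>
  inferInstanceAs (Decidable ((a, b) ∈ ([(0,1),(1,0),(1,2),(2,3),(3,0)] : List (Fin 4 × Fin 4))))

theorem hArc_gadget_not_from_two :
    ∀ p q r : Fin 4, HArc 2 p → HArc p q → HArc q r → ¬ HArc 2 r := by
  decide

/-- The colours of `x_e, y_e, z_e` for an arc `e = uv`, given whether `u` and `v` are sent
to `3`. -/
def gadgetColour : Bool → Bool → Fin 3 → Fin 4
  | true, _ => ![3, 0, 1]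
  | false, true => ![1, 2, 3]
  | false, false => ![1, 0, 1]

theorem gadgetColour_hArc : ∀ a b : Bool, (a && b) = false →
    HArc (cond a 2 0) (gadgetColour a b 0) ∧ HArc (gadgetColour a b 0) (gadgetColour a b 1) ∧
      HArc (gadgetColour a b 1) (gadgetColour a b 2) ∧
      HArc (cond b 2 0) (gadgetColour a b 2) := by
  decide

section

variable {α : Type*} (Ad : α → α → Prop)

def IsIndep (S : Finset α) : Prop :=
  ∀ a ∈ S, ∀ b ∈ S, a ≠ b → ¬ Ad a b

def IsHom (f : GV α Ad → Fin 4) : Prop :=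
  ∀ x y, GArc Ad x y → HArc (f x) (f y)

def toThree [Fintype α] (f : GV α Ad → Fin 4) : Finset α :=
  Finset.univ.filter fun v => f (Sum.inl v) = 2

variable {Ad}

theorem isIndep_toThree [Fintype α] {f : GV α Ad → Fin 4} (hf : IsHom Ad f) :
    IsIndep Ad (toThree Ad f) := by
  intro a ha b hb _ hab
  let e : {p : α × α // Ad p.1 p.2} := ⟨(a, b), hab⟩
  have hx := hf (Sum.inl a) (Sum.inr (e, 0)) (Or.inl ⟨rfl, rfl⟩)
  have hy := hf (Sum.inr (e, 0)) (Sum.inr (e, 1)) ⟨rfl, Or.inl ⟨rfl, rfl⟩⟩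
  have hz := hf (Sum.inr (e, 1)) (Sum.inr (e, 2)) ⟨rfl, Or.inr ⟨rfl, rfl⟩⟩
  have hbz := hf (Sum.inl b) (Sum.inr (e, 2)) (Or.inr ⟨rfl, rfl⟩)
  rw [(Finset.mem_filter.1 ha).2] at hx
  rw [(Finset.mem_filter.1 hb).2] at hbz
  exact hArc_gadget_not_from_two _ _ _ hx hy hz hbz

theorem sum_cost_eq [Fintype α] [DecidableRel Ad] (f : GV α Ad → Fin 4) :
    ∑ w, cost Ad (f w) w = Fintype.card α - (toThree Ad f).card := by
  have hsplit := Finset.card_filter_add_card_filter_not (s := Finset.univ)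
    fun v => f (Sum.inl v) = 2
  have hvertices : ∑ v, cost Ad (f (Sum.inl v)) (Sum.inl v) =
      (Finset.univ.filter fun v => ¬ f (Sum.inl v) = 2).card := by
    rw [Finset.card_filter]
    exact Finset.sum_congr rfl fun v _ => by simp only [cost, ite_not]
  rw [Fintype.sum_sum_type, hvertices]
  simp only [cost, Finset.sum_const_zero, add_zero]
  rw [Finset.card_univ] at hsplit
  unfold toThree
  omega

variable [DecidableEq α]

def indepHom (S : Finset α) : GV α Ad → Fin 4
  | Sum.inl v => cond (decide (v ∈ S)) 2 0
  | Sum.inr (e, i) => gadgetColour (decide (e.1.1 ∈ S)) (decide (e.1.2 ∈ S)) i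

theorem ends_not_both_mem {S : Finset α} (hS : IsIndep Ad S) [Std.Irrefl Ad]
    (e : {p : α × α // Ad p.1 p.2}) :
    (decide (e.1.1 ∈ S) && decide (e.1.2 ∈ S)) = false := by
  have hne : e.1.1 ≠ e.1.2 := fun h => irrefl_of Ad _ (h ▸ e.2)
  simpa using fun h₁ h₂ => hS _ h₁ _ h₂ hne e.2

theorem isHom_indepHom {S : Finset α} (hS : IsIndep Ad S) [Std.Irrefl Ad] :
    IsHom Ad (indepHom S) := by
  rintro (u | ⟨e, i⟩) (v | ⟨e', i'⟩) h
  · exact h.elim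
  · obtain ⟨hx, -, -, hz⟩ := gadgetColour_hArc _ _ (ends_not_both_mem hS e')
    rcases h with ⟨rfl, rfl⟩ | ⟨rfl, rfl⟩
    exacts [hx, hz]
  · exact h.elim
  · obtain ⟨-, hy, hz, -⟩ := gadgetColour_hArc _ _ (ends_not_both_mem hS e)
    obtain ⟨rfl, ⟨rfl, rfl⟩ | ⟨rfl, rfl⟩⟩ := h
    exacts [hy, hz]

theorem toThree_indepHom [Fintype α] (S : Finset α) : toThree Ad (indepHom S) = S := by
  ext v
  simp only [toThree, Finset.mem_filter, Finset.mem_univ, true_and]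
  by_cases hv : v ∈ S <;> simp [indepHom, hv]

end

theorem exists_isIndep_card_max {α : Type*} [Fintype α] (Ad : α → α → Prop) :
    ∃ S, IsIndep Ad S ∧ ∀ T, IsIndep Ad T → T.card ≤ S.card := by
  classical
  obtain ⟨S, hS, hmax⟩ := (Finset.univ.filter (IsIndep Ad)).exists_max_image Finset.card
    ⟨∅, Finset.mem_filter.2 ⟨Finset.mem_univ _, by simp [IsIndep]⟩⟩
  exact ⟨S, (Finset.mem_filter.1 hS).2,
    fun T hT => hmax T (Finset.mem_filter.2 ⟨Finset.mem_univ _, hT⟩)⟩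

theorem stmt13_general {α : Type*} [Fintype α]
    (Ad : α → α → Prop) [DecidableRel Ad] (hirr : Irreflexive Ad) :
    ∃ m : ℕ,
      IsGreatest {n : ℕ | ∃ S : Finset α,
        (∀ a ∈ S, ∀ b ∈ S, a ≠ b → ¬ Ad a b) ∧ S.card = n} m ∧
      (∃ f : GV α Ad → Fin 4, ∀ x y, GArc Ad x y → HArc (f x) (f y)) ∧
      IsLeast {n : ℕ | ∃ f : GV α Ad → Fin 4,
          (∀ x y, GArc Ad x y → HArc (f x) (f y)) ∧ (∑ w, cost Ad (f w) w) = n}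
        (Fintype.card α - m) := by
  classical
  have : Std.Irrefl Ad := ⟨hirr⟩
  obtain ⟨S, hS, hmax⟩ := exists_isIndep_card_max Ad
  refine ⟨S.card, ⟨⟨S, hS, rfl⟩, ?_⟩, ⟨_, isHom_indepHom hS⟩,
    ⟨indepHom S, isHom_indepHom hS, by rw [sum_cost_eq, toThree_indepHom]⟩, ?_⟩
  · rintro _ ⟨T, hT, rfl⟩
    exact hmax T hT
  · rintro _ ⟨f, hf, rfl⟩
    rw [sum_cost_eq]
    exact Nat.sub_le_sub_left (hmax _ (isIndep_toThree hf)) _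

/-- Lemma 4.1: a homomorphism of D' to H exists, and the minimum cost of a homomorphism
of D' to H equals |V(D)| − α(D). -/
theorem stmt13 {α : Type*} [Fintype α] [DecidableEq α]
    (Ad : α → α → Prop) [DecidableRel Ad] (hirr : Irreflexive Ad) :
    ∃ m : ℕ,
      IsGreatest {n : ℕ | ∃ S : Finset α,
        (∀ a ∈ S, ∀ b ∈ S, a ≠ b → ¬ Ad a b) ∧ S.card = n} m ∧
      (∃ f : GV α Ad → Fin 4, ∀ x y, GArc Ad x y → HArc (f x) (f y)) ∧
      IsLeast {n : ℕ | ∃ f : GV α Ad → Fin 4,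
          (∀ x y, GArc Ad x y → HArc (f x) (f y)) ∧ (∑ w, cost Ad (f w) w) = n}
        (Fintype.card α - m) :=
  stmt13_general Ad hirr

end MinHomC4P
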